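/- With the same hypotheses, uC_φ is an n-isometry, i.e. Σ_{i=0}^{n} (-1)^i C(n,i) ‖(uC_φ)^i f‖² = 0 for all f ∈ D((uC_φ)ⁿ), if and only if Δ_{J,n}(x) = 0 for μ-almost every x. -/

import Mathlib

/-!
The identity `‖(uC_φ)^i f‖² = ∫ J_i |f|² dμ`, which follows by induction on `i` from the change
of variables `∫ w · (g ∘ φ) dμ = ∫ (d(φ_*(w μ))/dμ) · g dμ`, turns
`∑ (-1)^i C(n,i) ‖(uC_φ)^i f‖²` into `∫ Δ_{J,n} |f|² dμ`. This vanishes when `Δ_{J,n} = 0` a.e. Conversely, testing it on indicators of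
finite-measure sets on which `∑ J_i` is bounded gives `∫_s Δ_{J,n} dμ = 0` for all such `s`; as the
`J_i` are a.e. finite, these sets exhaust `X` up to a null set, so `Δ_{J,n} = 0` a.e.
-/

open MeasureTheory ENNReal Finset

lemma memLp_two_iff_lintegral_enorm_sq_lt_top {X E : Type*} [MeasurableSpace X] {μ : Measure X}
    [NormedAddCommGroup E] {g : X → E} (hg : AEStronglyMeasurable g μ) :
    MemLp g 2 μ ↔ ∫⁻ x, ‖g x‖ₑ ^ 2 ∂μ < ∞ := by
  rw [MemLp, eLpNorm_lt_top_iff_lintegral_rpow_enorm_lt_top (by norm_num) (by norm_num)]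
  simp [hg]

lemma ae_eq_zero_of_forall_setIntegral_eq_zero_of_ae_mem_iUnion {X E : Type*}
    [MeasurableSpace X] {μ : Measure X} [SigmaFinite μ]
    [NormedAddCommGroup E] [NormedSpace ℝ E] [CompleteSpace E]
    {S : X → E} {B : ℕ → Set X} (hB : ∀ m, MeasurableSet (B m))
    (hcover : ∀ᵐ x ∂μ, ∃ m, x ∈ B m)
    (hint : ∀ m s, MeasurableSet s → s ⊆ B m → μ s < ∞ → IntegrableOn S s μ)
    (hzero : ∀ m s, MeasurableSet s → s ⊆ B m → μ s < ∞ → ∫ x in s, S x ∂μ = 0) :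
    S =ᵐ[μ] 0 := by
  have hrestrict : ∀ m, S =ᵐ[μ.restrict (B m)] 0 := fun m =>
    ae_eq_zero_of_forall_setIntegral_eq_of_sigmaFinite
      (fun s hs hμs => by
        rw [Measure.restrict_apply hs] at hμs
        rw [IntegrableOn, Measure.restrict_restrict hs]
        exact hint m _ (hs.inter (hB m)) Set.inter_subset_right hμs)
      (fun s hs hμs => by
        rw [Measure.restrict_apply hs] at hμs
        rw [Measure.restrict_restrict hs]
        exact hzero m _ (hs.inter (hB m)) Set.inter_subset_right hμs)
  have hmem : ∀ᵐ x ∂μ, ∀ m, x ∈ B m → S x = 0 :=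
    ae_all_iff.2 fun m => (ae_restrict_iff' (hB m)).1 (hrestrict m)
  filter_upwards [hcover, hmem] with x ⟨m, hm⟩ hx
  exact hx m hm

section WeightedComposition

variable {X : Type*} [MeasurableSpace X]

def weightedComp (u : X → ℂ) (φ : X → X) (f : X → ℂ) : X → ℂ := fun x => u x * f (φ x)

noncomputable def rnWeight (μ : Measure X) (u : X → ℂ) (φ : X → X) : ℕ → X → ℝ≥0∞
  | 0 => fun _ => 1
  | i + 1 => ((μ.withDensity fun x => rnWeight μ u φ i x * ‖u x‖ₑ ^ 2).map φ).rnDeriv μ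

variable {μ : Measure X} {u : X → ℂ} {φ : X → X}

lemma eq_rnWeight {J : ℕ → X → ℝ≥0∞} (hJ0 : J 0 = fun _ => 1)
    (hJ : ∀ i : ℕ, J (i + 1) =
      ((μ.withDensity fun x => J i x * (‖u x‖₊ : ℝ≥0∞) ^ 2).map φ).rnDeriv μ) :
    J = rnWeight μ u φ := by
  funext i
  induction i with
  | zero => exact hJ0
  | succ i ih => rw [hJ, ih]; rfl

lemma measurable_rnWeight (i : ℕ) : Measurable (rnWeight μ u φ i) := by
  cases i with
  | zero => exact measurable_const
  | succ i => exact Measure.measurable_rnDeriv _ _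

lemma lintegral_mul_comp_eq_lintegral_rnDeriv_mul [SigmaFinite μ] {w g : X → ℝ≥0∞}
    (hw : Measurable w) (hφ : Measurable φ) (hac : (μ.withDensity w).map φ ≪ μ)
    (hg : Measurable g) :
    ∫⁻ x, w x * g (φ x) ∂μ = ∫⁻ x, ((μ.withDensity w).map φ).rnDeriv μ x * g x ∂μ := by
  rw [lintegral_rnDeriv_mul hac hg.aemeasurable, lintegral_map hg hφ]
  exact (lintegral_withDensity_eq_lintegral_mul _ hw (hg.comp hφ)).symm

lemma measurable_weightedComp (hu : Measurable u) (hφ : Measurable φ) {f : X → ℂ}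
    (hf : Measurable f) : Measurable (weightedComp u φ f) :=
  hu.mul (hf.comp hφ)

lemma measurable_weightedComp_iterate (hu : Measurable u) (hφ : Measurable φ) (i : ℕ)
    {f : X → ℂ} (hf : Measurable f) : Measurable ((weightedComp u φ)^[i] f) := by
  induction i generalizing f with
  | zero => exact hf
  | succ i ih => exact ih (measurable_weightedComp hu hφ hf)

lemma lintegral_enorm_weightedComp_iterate_sq [SigmaFinite μ] (hu : Measurable u)
    (hφ : Measurable φ) (hns : μ.map φ ≪ μ) (i : ℕ) {f : X → ℂ} (hf : Measurable f) :
    ∫⁻ x, ‖(weightedComp u φ)^[i] f x‖ₑ ^ 2 ∂μ = ∫⁻ x, rnWeight μ u φ i x * ‖f x‖ₑ ^ 2 ∂μ := by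
  induction i generalizing f with
  | zero => simp [rnWeight]
  | succ i ih =>
    have hw : Measurable fun x => rnWeight μ u φ i x * ‖u x‖ₑ ^ 2 :=
      (measurable_rnWeight i).mul (hu.enorm.pow_const 2)
    rw [Function.iterate_succ_apply, ih (measurable_weightedComp hu hφ hf)]
    simp only [weightedComp, enorm_mul, mul_pow, ← mul_assoc]
    exact lintegral_mul_comp_eq_lintegral_rnDeriv_mul hw hφ
      (((withDensity_absolutelyContinuous μ _).map hφ).trans hns) (hf.enorm.pow_const 2)

section SigmaFinite

variable [SigmaFinite μ]

lemma memLp_weightedComp_iterate_iff (hu : Measurable u) (hφ : Measurable φ)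
    (hns : μ.map φ ≪ μ) (i : ℕ) {f : X → ℂ} (hf : Measurable f) :
    MemLp ((weightedComp u φ)^[i] f) 2 μ ↔ ∫⁻ x, rnWeight μ u φ i x * ‖f x‖ₑ ^ 2 ∂μ < ∞ := by
  rw [memLp_two_iff_lintegral_enorm_sq_lt_top
      (measurable_weightedComp_iterate hu hφ i hf).aestronglyMeasurable,
    lintegral_enorm_weightedComp_iterate_sq hu hφ hns i hf]

lemma memLp_weightedComp_iterate_indicator_one (hu : Measurable u) (hφ : Measurable φ)
    (hns : μ.map φ ≪ μ) {i : ℕ} {s : Set X} (hs : MeasurableSet s) (hμs : μ s < ∞)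
    {m : ℝ≥0∞} (hm : m < ∞) (hbound : ∀ x ∈ s, rnWeight μ u φ i x ≤ m) :
    MemLp ((weightedComp u φ)^[i] (s.indicator 1)) 2 μ := by
  have hsq : ∀ x, ‖s.indicator (1 : X → ℂ) x‖ₑ ^ 2 = s.indicator 1 x := fun x => by
    by_cases hx : x ∈ s <;> simp [hx]
  rw [memLp_weightedComp_iterate_iff hu hφ hns i (measurable_one.indicator hs)]
  calc ∫⁻ x, rnWeight μ u φ i x * ‖s.indicator (1 : X → ℂ) x‖ₑ ^ 2 ∂μ
      = ∫⁻ x in s, rnWeight μ u φ i x ∂μ := by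
        simp_rw [hsq, ← Set.indicator_mul_right, Pi.one_apply, mul_one, lintegral_indicator hs]
    _ ≤ ∫⁻ _ in s, m ∂μ := setLIntegral_mono measurable_const hbound
    _ < ∞ := by rw [setLIntegral_const]; exact mul_lt_top hm hμs

lemma integral_norm_weightedComp_iterate_sq (hu : Measurable u) (hφ : Measurable φ)
    (hns : μ.map φ ≪ μ) {i : ℕ} (hfin : ∀ᵐ x ∂μ, rnWeight μ u φ i x < ∞)
    {f : X → ℂ} (hf : Measurable f) :
    ∫ x, ‖(weightedComp u φ)^[i] f x‖ ^ 2 ∂μ =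
      ∫ x, (rnWeight μ u φ i x).toReal * ‖f x‖ ^ 2 ∂μ := by
  have hTf := measurable_weightedComp_iterate hu hφ i hf
  calc ∫ x, ‖(weightedComp u φ)^[i] f x‖ ^ 2 ∂μ
      = ∫ x, (‖(weightedComp u φ)^[i] f x‖ₑ ^ 2).toReal ∂μ := by simp
    _ = (∫⁻ x, rnWeight μ u φ i x * ‖f x‖ₑ ^ 2 ∂μ).toReal := by
      rw [integral_toReal (hTf.enorm.pow_const 2).aemeasurable
          (ae_of_all _ fun x => pow_lt_top enorm_lt_top),
        lintegral_enorm_weightedComp_iterate_sq hu hφ hns i hf]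
    _ = ∫ x, (rnWeight μ u φ i x).toReal * ‖f x‖ ^ 2 ∂μ := by
      rw [← integral_toReal (f := fun x => rnWeight μ u φ i x * ‖f x‖ₑ ^ 2)
        ((measurable_rnWeight i).mul (hf.enorm.pow_const 2)).aemeasurable]
      · simp
      · filter_upwards [hfin] with x hx using mul_lt_top hx (pow_lt_top enorm_lt_top)

lemma integrable_rnWeight_toReal_mul_norm_sq (hu : Measurable u) (hφ : Measurable φ)
    (hns : μ.map φ ≪ μ) {i : ℕ} {f : X → ℂ} (hf : Measurable f)
    (hmem : MemLp ((weightedComp u φ)^[i] f) 2 μ) :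
    Integrable (fun x => (rnWeight μ u φ i x).toReal * ‖f x‖ ^ 2) μ := by
  rw [memLp_weightedComp_iterate_iff hu hφ hns i hf] at hmem
  simpa using integrable_toReal_of_lintegral_ne_top
    ((measurable_rnWeight i).mul (hf.enorm.pow_const 2)).aemeasurable hmem.ne

lemma integrable_sum_mul_rnWeight_toReal_mul_norm_sq (hu : Measurable u)
    (hφ : Measurable φ) (hns : μ.map φ ≪ μ) (c : ℕ → ℝ) (n : ℕ) {f : X → ℂ}
    (hf : Measurable f) (hmem : ∀ i ≤ n, MemLp ((weightedComp u φ)^[i] f) 2 μ) :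
    Integrable (fun x =>
      (∑ i ∈ range (n + 1), c i * (rnWeight μ u φ i x).toReal) * ‖f x‖ ^ 2) μ := by
  simp only [Finset.sum_mul, mul_assoc]
  exact integrable_finsetSum _ fun i hi => (integrable_rnWeight_toReal_mul_norm_sq hu hφ hns hf
    (hmem i (Nat.lt_succ_iff.1 (mem_range.1 hi)))).const_mul _

lemma sum_mul_integral_norm_weightedComp_iterate_sq (hu : Measurable u) (hφ : Measurable φ)
    (hns : μ.map φ ≪ μ) (hfin : ∀ i, ∀ᵐ x ∂μ, rnWeight μ u φ i x < ∞) (c : ℕ → ℝ) (n : ℕ)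
    {f : X → ℂ} (hf : Measurable f) (hmem : ∀ i ≤ n, MemLp ((weightedComp u φ)^[i] f) 2 μ) :
    ∑ i ∈ range (n + 1), c i * ∫ x, ‖(weightedComp u φ)^[i] f x‖ ^ 2 ∂μ =
      ∫ x, (∑ i ∈ range (n + 1), c i * (rnWeight μ u φ i x).toReal) * ‖f x‖ ^ 2 ∂μ := by
  have hint : ∀ i ∈ range (n + 1),
      Integrable (fun x => c i * ((rnWeight μ u φ i x).toReal * ‖f x‖ ^ 2)) μ :=
    fun i hi => (integrable_rnWeight_toReal_mul_norm_sq hu hφ hns hf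
      (hmem i (Nat.lt_succ_iff.1 (mem_range.1 hi)))).const_mul _
  simp_rw [integral_norm_weightedComp_iterate_sq hu hφ hns (hfin _) hf, ← integral_const_mul,
    ← integral_finsetSum _ hint, Finset.sum_mul, mul_assoc]

lemma ae_sum_mul_rnWeight_eq_zero (hu : Measurable u) (hφ : Measurable φ)
    (hns : μ.map φ ≪ μ) (hfin : ∀ i, ∀ᵐ x ∂μ, rnWeight μ u φ i x < ∞) (c : ℕ → ℝ) (n : ℕ)
    (H : ∀ f : X → ℂ, Measurable f → (∀ i ≤ n, MemLp ((weightedComp u φ)^[i] f) 2 μ) →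
      ∑ i ∈ range (n + 1), c i * ∫ x, ‖(weightedComp u φ)^[i] f x‖ ^ 2 ∂μ = 0) :
    ∀ᵐ x ∂μ, ∑ i ∈ range (n + 1), c i * (rnWeight μ u φ i x).toReal = 0 := by
  set Δ : X → ℝ := fun x => ∑ i ∈ range (n + 1), c i * (rnWeight μ u φ i x).toReal
  set B : ℕ → Set X := fun m => {x | ∑ i ∈ range (n + 1), rnWeight μ u φ i x ≤ m}
  have hB : ∀ m, MeasurableSet (B m) := fun m =>
    measurableSet_le (Finset.measurable_sum _ fun i _ => measurable_rnWeight i) measurable_const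
  have hcover : ∀ᵐ x ∂μ, ∃ m, x ∈ B m := by
    filter_upwards [ae_all_iff.2 hfin] with x hx
    obtain ⟨m, hm⟩ := ENNReal.exists_nat_gt (sum_lt_top.2 fun i _ => hx i).ne
    exact ⟨m, hm.le⟩
  have hmem : ∀ m s, MeasurableSet s → s ⊆ B m → μ s < ∞ →
      ∀ i ≤ n, MemLp ((weightedComp u φ)^[i] (s.indicator 1)) 2 μ :=
    fun m s hs hsB hμs i hi => memLp_weightedComp_iterate_indicator_one hu hφ hns hs hμs
      (natCast_lt_top m) fun x hx => (single_le_sum (f := fun j => rnWeight μ u φ j x)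
        (fun _ _ => zero_le) (mem_range.2 (Nat.lt_succ_of_le hi))).trans (hsB hx)
  have hΔ : ∀ s : Set X, (fun x => Δ x * ‖s.indicator (1 : X → ℂ) x‖ ^ 2) = s.indicator Δ :=
    fun s => funext fun x => by by_cases hx : x ∈ s <;> simp [hx]
  refine ae_eq_zero_of_forall_setIntegral_eq_zero_of_ae_mem_iUnion hB hcover
    (fun m s hs hsB hμs => ?_) (fun m s hs hsB hμs => ?_)
  · have hint := integrable_sum_mul_rnWeight_toReal_mul_norm_sq hu hφ hns c n
      (measurable_one.indicator hs) (hmem m s hs hsB hμs)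
    rwa [hΔ s, integrable_indicator_iff hs] at hint
  · have h := H _ (measurable_one.indicator hs) (hmem m s hs hsB hμs)
    rwa [sum_mul_integral_norm_weightedComp_iterate_sq hu hφ hns hfin c n
      (measurable_one.indicator hs) (hmem m s hs hsB hμs), hΔ s, integral_indicator hs] at h

end SigmaFinite

end WeightedComposition

theorem stmt8_general
    {X : Type*} [MeasurableSpace X] (μ : Measure X) [SigmaFinite μ]
    (u : X → ℂ) (hu : Measurable u)
    (φ : X → X) (hφ : Measurable φ)
    (hns : (μ.map φ) ≪ μ)
    (J : ℕ → X → ℝ≥0∞)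
    (hJ0 : J 0 = fun _ => 1)
    (hJ : ∀ i : ℕ, J (i + 1) =
      ((μ.withDensity fun x => J i x * (‖u x‖₊ : ℝ≥0∞) ^ 2).map φ).rnDeriv μ)
    (hfin : ∀ i, ∀ᵐ x ∂μ, J i x < ∞)
    (T : (X → ℂ) → X → ℂ) (hT : T = fun f x => u x * f (φ x))
    (n : ℕ) :
    (∀ f : X → ℂ, Measurable f → (∀ i ≤ n, MemLp (T^[i] f) 2 μ) →
        ∑ i ∈ range (n + 1),
          (-1 : ℝ) ^ i * (n.choose i) * ∫ x, ‖(T^[i] f) x‖ ^ 2 ∂μ = 0) ↔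
      ∀ᵐ x ∂μ, ∑ i ∈ range (n + 1),
          (-1 : ℝ) ^ i * (n.choose i) * (J i x).toReal = 0 := by
  obtain rfl : J = rnWeight μ u φ := eq_rnWeight hJ0 hJ
  obtain rfl : T = weightedComp u φ := hT
  refine ⟨ae_sum_mul_rnWeight_eq_zero hu hφ hns hfin _ n, fun hΔ f hf hmem => ?_⟩
  rw [sum_mul_integral_norm_weightedComp_iterate_sq hu hφ hns hfin _ n hf hmem]
  refine integral_eq_zero_of_ae ?_
  filter_upwards [hΔ] with x hx
  simp [hx]

/-- Proposition 2.6(ii): `uC_φ` is an `n`-isometry iff `Δ_{J,n} = 0` a.e. -/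
theorem stmt8
    {X : Type*} [MeasurableSpace X] (μ : Measure X) [SigmaFinite μ]
    (u : X → ℂ) (hu : Measurable u)
    (φ : X → X) (hφ : Measurable φ)
    (hns : (μ.map φ) ≪ μ)
    (J : ℕ → X → ℝ≥0∞)
    (hJ0 : J 0 = fun _ => 1)
    (hJ : ∀ i : ℕ, J (i + 1) =
      ((μ.withDensity fun x => J i x * (‖u x‖₊ : ℝ≥0∞) ^ 2).map φ).rnDeriv μ)
    (hfin : ∀ i, ∀ᵐ x ∂μ, J i x < ∞)
    (T : (X → ℂ) → X → ℂ) (hT : T = fun f x => u x * f (φ x))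
    (n : ℕ) (hn : 1 ≤ n)
    (hdense : Dense {f : Lp ℂ 2 μ |
        ∀ i ≤ n, MemLp (T^[i] (f : X → ℂ)) 2 μ}) :
    (∀ f : X → ℂ, Measurable f → (∀ i ≤ n, MemLp (T^[i] f) 2 μ) →
        ∑ i ∈ range (n + 1),
          (-1 : ℝ) ^ i * (n.choose i) * ∫ x, ‖(T^[i] f) x‖ ^ 2 ∂μ = 0) ↔
      ∀ᵐ x ∂μ, ∑ i ∈ range (n + 1),
          (-1 : ℝ) ^ i * (n.choose i) * (J i x).toReal = 0 :=
  stmt8_general μ u hu φ hφ hns J hJ0 hJ hfin T hT n
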